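/- arXiv:1607.05644 — 6 statements merged into one kernel-verified Lean document; each statement's English description precedes it below -/
import Mathlib

section
/- Let V be a real vector space and T : V⁵ → ℝ a 5-linear map that is skew-symmetric in its first two arguments, symmetric under exchanging the pair (1st,2nd) of arguments with the pair (3rd,4th), satisfies the first Bianchi identity in its first three arguments, and satisfies the second Bianchi identity in its last three arguments (i.e., T(X,Y,Z,W,U) + T(X,Y,W,U,Z) + T(X,Y,U,Z,W) = 0). If moreover T(U,V,U,V,U) = 0 for all U, V ∈ V, then T = 0. -/
/-- A 5-linear form with the algebraic symmetries of ∇R that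
vanishes on all quintuples (U,V,U,V,U) is zero. -/
theorem stmt0 {V : Type*} [AddCommGroup V] [Module ℝ V]
    (T : MultilinearMap ℝ (fun _ : Fin 5 => V) ℝ)
    (hskew : ∀ X Y Z W U : V, T ![X, Y, Z, W, U] = - T ![Y, X, Z, W, U])
    (hpair : ∀ X Y Z W U : V, T ![X, Y, Z, W, U] = T ![Z, W, X, Y, U])
    (hb1 : ∀ X Y Z W U : V,
      T ![X, Y, Z, W, U] + T ![Y, Z, X, W, U] + T ![Z, X, Y, W, U] = 0)
    (hb2 : ∀ X Y Z W U : V,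
      T ![X, Y, Z, W, U] + T ![X, Y, W, U, Z] + T ![X, Y, U, Z, W] = 0)
    (hdiag : ∀ U V' : V, T ![U, V', U, V', U] = 0) :
    T = 0 := by
  have e0 : ∀ a b c d e f : V, T ![a+b,c,d,e,f] = T ![a,c,d,e,f] + T ![b,c,d,e,f] := by
    intro a b c d e f
    have h : ∀ x : V, ![x,c,d,e,f] = Function.update ![a,c,d,e,f] 0 x := by
      intro x; funext i; fin_cases i <;> simp
    rw [h, T.map_update_add, ← h a, ← h b]
  have e1 : ∀ a b c d e f : V, T ![a,b+c,d,e,f] = T ![a,b,d,e,f] + T ![a,c,d,e,f] := by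
    intro a b c d e f
    have h : ∀ x : V, ![a,x,d,e,f] = Function.update ![a,b,d,e,f] 1 x := by
      intro x; funext i; fin_cases i <;> simp
    rw [h, T.map_update_add, ← h b, ← h c]
  have e2 : ∀ a b c d e f : V, T ![a,b,c+d,e,f] = T ![a,b,c,e,f] + T ![a,b,d,e,f] := by
    intro a b c d e f
    have h : ∀ x : V, ![a,b,x,e,f] = Function.update ![a,b,c,e,f] 2 x := by
      intro x; funext i; fin_cases i <;> simp
    rw [h, T.map_update_add, ← h c, ← h d]
  have e3 : ∀ a b c d e f : V, T ![a,b,c,d+e,f] = T ![a,b,c,d,f] + T ![a,b,c,e,f] := by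
    intro a b c d e f
    have h : ∀ x : V, ![a,b,c,x,f] = Function.update ![a,b,c,d,f] 3 x := by
      intro x; funext i; fin_cases i <;> simp
    rw [h, T.map_update_add, ← h d, ← h e]
  have e4 : ∀ a b c d e f : V, T ![a,b,c,d,e+f] = T ![a,b,c,d,e] + T ![a,b,c,d,f] := by
    intro a b c d e f
    have h : ∀ x : V, ![a,b,c,d,x] = Function.update ![a,b,c,d,e] 4 x := by
      intro x; funext i; fin_cases i <;> simp
    rw [h, T.map_update_add, ← h e, ← h f]
  have Pf : ∀ X Y Z P Q : V,
      T ![X, P, Y, Q, Z] + T ![X, Q, Y, P, Z] + T ![X, P, Z, Q, Y] + T ![X, Q, Z, P, Y] + T ![Y, P, X, Q, Z] + T ![Y, Q, X, P, Z] + T ![Y, P, Z, Q, X] + T ![Y, Q, Z, P, X] + T ![Z, P, X, Q, Y] + T ![Z, Q, X, P, Y] + T ![Z, P, Y, Q, X] + T ![Z, Q, Y, P, X] = 0 := by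
    intro X Y Z P Q
    have hXP := hdiag (X) (P)
    have hXQ := hdiag (X) (Q)
    have hXPQ := hdiag (X) (P+Q)
    have hYP := hdiag (Y) (P)
    have hYQ := hdiag (Y) (Q)
    have hYPQ := hdiag (Y) (P+Q)
    have hZP := hdiag (Z) (P)
    have hZQ := hdiag (Z) (Q)
    have hZPQ := hdiag (Z) (P+Q)
    have hXYP := hdiag (X+Y) (P)
    have hXYQ := hdiag (X+Y) (Q)
    have hXYPQ := hdiag (X+Y) (P+Q)
    have hXZP := hdiag (X+Z) (P)
    have hXZQ := hdiag (X+Z) (Q)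
    have hXZPQ := hdiag (X+Z) (P+Q)
    have hYZP := hdiag (Y+Z) (P)
    have hYZQ := hdiag (Y+Z) (Q)
    have hYZPQ := hdiag (Y+Z) (P+Q)
    have hXYZP := hdiag (X+Y+Z) (P)
    have hXYZQ := hdiag (X+Y+Z) (Q)
    have hXYZPQ := hdiag (X+Y+Z) (P+Q)
    simp only [e0, e1, e2, e3, e4] at hXP hXQ hXPQ hYP hYQ hYPQ hZP hZQ hZPQ hXYP hXYQ hXYPQ hXZP hXZQ hXZPQ hYZP hYZQ hYZPQ hXYZP hXYZQ hXYZPQ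
    linear_combination - hXP - hXQ + hXPQ - hYP - hYQ + hYPQ - hZP - hZQ + hZPQ + hXYP + hXYQ - hXYPQ + hXZP + hXZQ - hXZPQ + hYZP + hYZQ - hYZPQ - hXYZP - hXYZQ + hXYZPQ
  have key : ∀ v0 v1 v2 v3 v4 : V, T ![v0, v1, v2, v3, v4] = 0 := by
    intro v0 v1 v2 v3 v4
    linear_combination (1/3 : ℝ) * (hskew v0 v1 v2 v3 v4) + (1/6 : ℝ) * (hpair v0 v1 v2 v3 v4) + (1/3 : ℝ) * (hb2 v0 v1 v2 v3 v4) + (1/24 : ℝ) * (hskew v0 v1 v2 v4 v3) + (1/6 : ℝ) * (hpair v0 v1 v2 v4 v3) - (5/12 : ℝ) * (hb1 v0 v1 v2 v4 v3) + (1/8 : ℝ) * (hb2 v0 v1 v2 v4 v3) - (1/6 : ℝ) * (hskew v0 v1 v3 v2 v4) - (1/12 : ℝ) * (hpair v0 v1 v3 v2 v4) + (1/8 : ℝ) * (hb1 v0 v1 v3 v2 v4) + (1/12 : ℝ) * (hskew v0 v1 v3 v4 v2) + (1/12 : ℝ) * (hpair v0 v1 v3 v4 v2) - (7/12 : ℝ)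 * (hb1 v0 v1 v3 v4 v2) - (1/3 : ℝ) * (hb1 v0 v1 v4 v2 v3) + (1/6 : ℝ) * (hpair v0 v1 v4 v3 v2) - (11/24 : ℝ) * (hb1 v0 v1 v4 v3 v2) - (1/12 : ℝ) * (hb2 v0 v2 v1 v3 v4) + (5/12 : ℝ) * (hskew v0 v2 v1 v4 v3) - (7/24 : ℝ) * (hpair v0 v2 v1 v4 v3) - (1/12 : ℝ) * (hb1 v0 v2 v1 v4 v3) - (1/12 : ℝ) * (hb2 v0 v2 v1 v4 v3) + (1/12 : ℝ) * (hskew v0 v2 v3 v1 v4) + (1/24 : ℝ) * (hpair v0 v2 v3 v4 v1) + (1/12 : ℝ) * (hb1 v0 v2 v4 v1 v3) - (1/6 : ℝ) * (hskew v0 v3 v1 v2 v4) + (1/4 : ℝ) * (hpair v0 v3 v1 v2 v4) - (1/6 : ℝ) * (hb2 v0 v3 v1 v2 v4) + (7/12 : ℝ) * (hskew v0 v3 v1 v4 v2) - (3/8 : ℝ) * (hpair v0 v3 v1 v4 v2) - (1/4 : ℝ) * (hb2 v0 v3 v1 v4 v2) + (1/6 : ℝ) * (hpair v0 v3 v2 v1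 v4) - (1/12 : ℝ) * (hb1 v0 v3 v2 v1 v4) + (1/24 : ℝ) * (hpair v0 v3 v2 v4 v1) + (1/12 : ℝ) * (hskew v0 v3 v4 v2 v1) + (1/12 : ℝ) * (hpair v0 v3 v4 v2 v1) + (5/24 : ℝ) * (hskew v0 v4 v1 v2 v3) - (1/6 : ℝ) * (hpair v0 v4 v1 v2 v3) - (1/12 : ℝ) * (hb2 v0 v4 v1 v2 v3) + (2/3 : ℝ) * (hskew v0 v4 v1 v3 v2) - (5/8 : ℝ) * (hpair v0 v4 v1 v3 v2) - (1/6 : ℝ) * (hb1 v0 v4 v1 v3 v2) - (1/12 : ℝ) * (hskew v0 v4 v2 v1 v3) - (1/24 : ℝ) * (hpair v0 v4 v2 v3 v1) + (1/24 : ℝ) * (hpair v0 v4 v3 v2 v1) - (1/12 : ℝ) * (hb1 v0 v4 v3 v2 v1) - (1/3 : ℝ) * (hpair v1 v0 v2 v3 v4) - (1/8 : ℝ) * (hpair v1 v0 v2 v4 v3) + (1/6 : ℝ) * (hb2 v1 v0 v2 v4 v3) - (1/12 : ℝ) * (hb1 v1 v0 v3 v4 v2) + (1/6 : ℝ) * (hb2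 v1 v2 v0 v3 v4) + (5/24 : ℝ) * (hb2 v1 v2 v0 v4 v3) - (1/24 : ℝ) * (hpair v1 v2 v3 v0 v4) - (1/6 : ℝ) * (hb1 v1 v2 v3 v0 v4) - (1/8 : ℝ) * (hskew v1 v2 v3 v4 v0) + (1/24 : ℝ) * (hpair v1 v2 v3 v4 v0) - (1/8 : ℝ) * (hb1 v1 v2 v3 v4 v0) - (1/8 : ℝ) * (hpair v1 v2 v4 v0 v3) - (1/24 : ℝ) * (hb1 v1 v2 v4 v0 v3) - (1/3 : ℝ) * (hskew v1 v2 v4 v3 v0) + (1/12 : ℝ) * (hpair v1 v2 v4 v3 v0) - (1/24 : ℝ) * (hb1 v1 v2 v4 v3 v0) - (5/24 : ℝ) * (hb2 v1 v3 v0 v2 v4) - (1/6 : ℝ) * (hb2 v1 v3 v0 v4 v2) + (1/6 : ℝ) * (hskew v1 v3 v2 v0 v4) + (1/24 : ℝ) * (hskew v1 v3 v2 v4 v0) + (1/12 : ℝ) * (hpair v1 v3 v2 v4 v0) - (1/24 : ℝ) * (hb1 v1 v3 v2 v4 v0) + (5/24 : ℝ) * (hpair v1 v3 v4 v0 v2)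 + (1/12 : ℝ) * (hpair v1 v3 v4 v2 v0) - (1/24 : ℝ) * (hb2 v1 v4 v0 v3 v2) + (1/24 : ℝ) * (hskew v1 v4 v2 v0 v3) - (1/8 : ℝ) * (hskew v1 v4 v2 v3 v0) + (1/12 : ℝ) * (hpair v2 v1 v3 v4 v0) + (1/6 : ℝ) * (hpair v2 v1 v4 v3 v0) - (1/6 : ℝ) * (hb2 v2 v3 v0 v4 v1) - (1/12 : ℝ) * (hb2 v2 v4 v0 v3 v1) + (1/8 : ℝ) * (Pf v0 v1 v2 v3 v4) + (1/24 : ℝ) * (Pf v0 v1 v3 v2 v4) + (1/12 : ℝ) * (Pf v0 v1 v4 v2 v3) + (1/12 : ℝ) * (Pf v0 v2 v3 v1 v4) + (1/6 : ℝ) * (Pf v0 v2 v4 v1 v3)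
  ext m
  have hm : m = ![m 0, m 1, m 2, m 3, m 4] := by
    funext i; fin_cases i <;> rfl
  rw [MultilinearMap.zero_apply, hm]
  exact key _ _ _ _ _
end

section
/- Let V be a real vector space and T : V⁵ → ℝ a multilinear map with the algebraic symmetries of the covariant derivative of the Riemann curvature tensor (skew in first two arguments, symmetric in the two pairs (1,2) and (3,4), first Bianchi in arguments 1–3, second Bianchi in arguments 3–5). If T(U,V,U,V,U) = 0 for all U, V, then for all X, Y, Z, U, V: T(X,V,Y,Z,U) + T(Y,V,U,Z,X) + T(U,V,X,Z,Y) + T(X,Z,Y,V,U) + T(Y,Z,U,V,X) + T(U,Z,X,V,Y) = 0. -/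
section
variable {V : Type*} [AddCommGroup V] [Module ℝ V]

private lemma Tadd0 (T : MultilinearMap ℝ (fun _ : Fin 5 => V) ℝ) (u v w x y z : V) :
    T ![u + v, w, x, y, z] = T ![u, w, x, y, z] + T ![v, w, x, y, z] := by
  have e : ∀ a : V, Function.update ![u, w, x, y, z] 0 a = ![a, w, x, y, z] := by
    intro a; ext i; fin_cases i <;> simp
  rw [← e, T.map_update_add, e, e]

private lemma Tadd1 (T : MultilinearMap ℝ (fun _ : Fin 5 => V) ℝ) (u v w x y z : V) :
    T ![w, u + v, x, y, z] = T ![w, u, x, y, z] + T ![w, v, x, y, z] := by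
  have e : ∀ a : V, Function.update ![w, u, x, y, z] 1 a = ![w, a, x, y, z] := by
    intro a; ext i; fin_cases i <;> simp
  rw [← e, T.map_update_add, e, e]

private lemma Tadd2 (T : MultilinearMap ℝ (fun _ : Fin 5 => V) ℝ) (u v w x y z : V) :
    T ![w, x, u + v, y, z] = T ![w, x, u, y, z] + T ![w, x, v, y, z] := by
  have e : ∀ a : V, Function.update ![w, x, u, y, z] 2 a = ![w, x, a, y, z] := by
    intro a; ext i; fin_cases i <;> simp
  rw [← e, T.map_update_add, e, e]

private lemma Tadd3 (T : MultilinearMap ℝ (fun _ : Fin 5 => V) ℝ) (u v w x y z : V) :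
    T ![w, x, y, u + v, z] = T ![w, x, y, u, z] + T ![w, x, y, v, z] := by
  have e : ∀ a : V, Function.update ![w, x, y, u, z] 3 a = ![w, x, y, a, z] := by
    intro a; ext i; fin_cases i <;> simp
  rw [← e, T.map_update_add, e, e]

private lemma Tadd4 (T : MultilinearMap ℝ (fun _ : Fin 5 => V) ℝ) (u v w x y z : V) :
    T ![w, x, y, z, u + v] = T ![w, x, y, z, u] + T ![w, x, y, z, v] := by
  have e : ∀ a : V, Function.update ![w, x, y, z, u] 4 a = ![w, x, y, z, a] := by
    intro a; ext i; fin_cases i <;> simp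
  rw [← e, T.map_update_add, e, e]

end

set_option maxHeartbeats 1000000 in
/-- polarization of T(U,V,U,V,U)=0 yields the six-term identity (2). -/
theorem stmt1 {V : Type*} [AddCommGroup V] [Module ℝ V]
    (T : MultilinearMap ℝ (fun _ : Fin 5 => V) ℝ)
    (hskew : ∀ X Y Z W U : V, T ![X, Y, Z, W, U] = - T ![Y, X, Z, W, U])
    (hpair : ∀ X Y Z W U : V, T ![X, Y, Z, W, U] = T ![Z, W, X, Y, U])
    (hb1 : ∀ X Y Z W U : V,
      T ![X, Y, Z, W, U] + T ![Y, Z, X, W, U] + T ![Z, X, Y, W, U] = 0)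
    (hb2 : ∀ X Y Z W U : V,
      T ![X, Y, Z, W, U] + T ![X, Y, W, U, Z] + T ![X, Y, U, Z, W] = 0)
    (hdiag : ∀ U V' : V, T ![U, V', U, V', U] = 0) :
    ∀ X Y Z U V' : V,
      T ![X, V', Y, Z, U] + T ![Y, V', U, Z, X] + T ![U, V', X, Z, Y] +
      T ![X, Z, Y, V', U] + T ![Y, Z, U, V', X] + T ![U, Z, X, V', Y] = 0 := by
  intro X Y Z U V'
  have h1 := hdiag (X + Y + U) (V' + Z)
  have h2 := hdiag (X + Y) (V' + Z)
  have h3 := hdiag (X + U) (V' + Z)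
  have h4 := hdiag (Y + U) (V' + Z)
  have h5 := hdiag X (V' + Z)
  have h6 := hdiag Y (V' + Z)
  have h7 := hdiag U (V' + Z)
  have h8 := hdiag (X + Y + U) V'
  have h9 := hdiag (X + Y) V'
  have h10 := hdiag (X + U) V'
  have h11 := hdiag (Y + U) V'
  have h12 := hdiag (X + Y + U) Z
  have h13 := hdiag (X + Y) Z
  have h14 := hdiag (X + U) Z
  have h15 := hdiag (Y + U) Z
  simp only [Tadd0, Tadd1, Tadd2, Tadd3, Tadd4] at h1 h2 h3 h4 h5 h6 h7 h8 h9 h10 h11 h12 h13 h14 h15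
  have p1 := hpair Y V' X Z U
  have p2 := hpair X V' U Z Y
  have p3 := hpair U V' Y Z X
  have p4 := hpair Y Z X V' U
  have p5 := hpair X Z U V' Y
  have p6 := hpair U Z Y V' X
  linear_combination (1/2 : ℝ) * (h1 - h2 - h3 - h4 + h5 + h6 + h7 - h8 + h9 + h10 + h11
      - h12 + h13 + h14 + h15) - (1/2 : ℝ) * (p1 + p2 + p3 + p4 + p5 + p6)
      - (1/2 : ℝ) * (hdiag X V' + hdiag X Z + hdiag Y V' + hdiag Y Z + hdiag U V' + hdiag U Z)
end

section
/- Let V be a real vector space and T : V⁵ → ℝ a multilinear map with the algebraic symmetries of ∇R (skew in first two arguments, pair symmetry, first and second Bianchi identities). Define S : V⁵ → ℝ by S(X,Y,Z,W,U) := T(X,Y,Z,W,U) + T(Z,Y,U,W,X) + T(U,Y,X,W,Z) + T(X,W,Z,Y,U) + T(Z,W,U,Y,X) + T(U,W,X,Y,Z). Then T(Y,X,U,Z,W) = -(1/6)·S(X,Y,W,Z,U) - (1/12)·S(Y,Z,X,W,U) + (1/12)·S(Y,W,X,U,Z) + (1/6)·S(X,Y,Z,U,W). -/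
/-- The symmetrization S of equation (3) of the paper. -/
def S5 {V : Type*} [AddCommGroup V] [Module ℝ V]
    (T : MultilinearMap ℝ (fun _ : Fin 5 => V) ℝ) (X Y Z W U : V) : ℝ :=
  T ![X, Y, Z, W, U] + T ![Z, Y, U, W, X] + T ![U, Y, X, W, Z] +
  T ![X, W, Z, Y, U] + T ![Z, W, U, Y, X] + T ![U, W, X, Y, Z]

set_option maxRecDepth 8000 in
/-- the explicit left inverse (4) of the map T ↦ S. -/
theorem stmt2 {V : Type*} [AddCommGroup V] [Module ℝ V]
    (T : MultilinearMap ℝ (fun _ : Fin 5 => V) ℝ)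
    (hskew : ∀ X Y Z W U : V, T ![X, Y, Z, W, U] = - T ![Y, X, Z, W, U])
    (hpair : ∀ X Y Z W U : V, T ![X, Y, Z, W, U] = T ![Z, W, X, Y, U])
    (hb1 : ∀ X Y Z W U : V,
      T ![X, Y, Z, W, U] + T ![Y, Z, X, W, U] + T ![Z, X, Y, W, U] = 0)
    (hb2 : ∀ X Y Z W U : V,
      T ![X, Y, Z, W, U] + T ![X, Y, W, U, Z] + T ![X, Y, U, Z, W] = 0) :
    ∀ X Y Z W U : V,
      T ![Y, X, U, Z, W] =
        -(1/6 : ℝ) * S5 T X Y W Z U - (1/12 : ℝ) * S5 T Y Z X W U +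
        (1/12 : ℝ) * S5 T Y W X U Z + (1/6 : ℝ) * S5 T X Y Z U W := by
  intro X Y Z W U
  simp only [S5]
  linarith [hskew X Y Z W U,
    hpair X Y Z W U,
    hb2 X Y Z W U,
    hskew X Y Z U W,
    hpair X Y Z U W,
    hb1 X Y Z U W,
    hb2 X Y Z U W,
    hskew X Y W Z U,
    hb1 X Y W Z U,
    hskew X Y W U Z,
    hpair X Y W U Z,
    hskew X Y U Z W,
    hpair X Y U Z W,
    hb1 X Y U Z W,
    hskew X Y U W Z,
    hpair X Z Y W U,
    hb2 X Z Y W U,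
    hskew X Z Y U W,
    hpair X Z Y U W,
    hpair X Z W Y U,
    hb1 X Z W Y U,
    hb1 X Z W U Y,
    hb1 X Z U Y W,
    hb1 X Z U W Y,
    hskew X W Y Z U,
    hpair X W Y Z U,
    hb1 X W Y Z U,
    hb2 X W Y Z U,
    hpair X W Y U Z,
    hb1 X W Y U Z,
    hb2 X W Y U Z,
    hskew X W Z Y U,
    hskew X W Z U Y,
    hpair X W Z U Y,
    hpair X W U Y Z,
    hskew X U Y Z W,
    hpair X U Y Z W,
    hb1 X U Y Z W,
    hskew X U Y W Z,
    hb1 X U Y W Z,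
    hskew X U Z Y W,
    hskew X U Z W Y,
    hpair Y X Z W U,
    hpair Y X Z U W,
    hb2 Y Z X W U,
    hb2 Y Z X U W,
    hb1 Y Z W X U,
    hskew Y Z W U X,
    hb1 Y Z W U X,
    hpair Y Z U X W,
    hpair Y Z U W X,
    hb2 Y W X Z U,
    hb2 Y W X U Z,
    hskew Y W Z X U,
    hskew Y W Z U X,
    hpair Y W Z U X,
    hpair Y W U X Z,
    hskew Y W U Z X,
    hpair Y W U Z X,
    hb2 Z W X U Y,
    hskew Z W U Y X,
    hb2 Z U X W Y]
end

section
/- Let V be a real vector space and T : V⁵ → ℝ a multilinear map with the algebraic symmetries of ∇R. If the symmetrized combination S(X,Y,Z,W,U) := T(X,Y,Z,W,U) + T(Z,Y,U,W,X) + T(U,Y,X,W,Z) + T(X,W,Z,Y,U) + T(Z,W,U,Y,X) + T(U,W,X,Y,Z) vanishes identically, then T = 0. -/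
/-- Lemma 1: if S vanishes identically then T = 0. -/
theorem stmt3 {V : Type*} [AddCommGroup V] [Module ℝ V]
    (T : MultilinearMap ℝ (fun _ : Fin 5 => V) ℝ)
    (hskew : ∀ X Y Z W U : V, T ![X, Y, Z, W, U] = - T ![Y, X, Z, W, U])
    (hpair : ∀ X Y Z W U : V, T ![X, Y, Z, W, U] = T ![Z, W, X, Y, U])
    (hb1 : ∀ X Y Z W U : V,
      T ![X, Y, Z, W, U] + T ![Y, Z, X, W, U] + T ![Z, X, Y, W, U] = 0)
    (hb2 : ∀ X Y Z W U : V,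
      T ![X, Y, Z, W, U] + T ![X, Y, W, U, Z] + T ![X, Y, U, Z, W] = 0)
    (hS : ∀ X Y Z W U : V, S5 T X Y Z W U = 0) :
    T = 0 := by
  have hS : ∀ X Y Z W U : V,
      T ![X, Y, Z, W, U] + T ![Z, Y, U, W, X] + T ![U, Y, X, W, Z] +
      T ![X, W, Z, Y, U] + T ![Z, W, U, Y, X] + T ![U, W, X, Y, Z] = 0 := hS
  ext x
  have hx : x = ![x 0, x 1, x 2, x 3, x 4] := by
    funext i; fin_cases i <;> rfl
  rw [hx]
  show T ![x 0, x 1, x 2, x 3, x 4] = 0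
  set X := x 0; set Y := x 1; set Z := x 2; set W := x 3; set U := x 4
  linear_combination (-1/6 : ℝ) * hS X Z Y W U + (-1/12 : ℝ) * hS X Z W U Y + (-1/6 : ℝ) * hS X W Y U Z + (-1/12 : ℝ) * hS X W Z U Y + (-1/6 : ℝ) * hS Y X W U Z + (-1/3 : ℝ) * hS Y X U W Z + (3/4 : ℝ) * hb1 X Y Z W U + (1/12 : ℝ) * hb1 X Y Z U W + (7/12 : ℝ) * hb1 X Y W Z U + (-1/12 : ℝ) * hb1 X Y W U Z + (1/4 : ℝ) * hb1 X Y U Z W + (1/6 : ℝ) * hb1 X Z W Y U + (1/6 : ℝ) * hb1 X Z W U Y + (1/12 : ℝ) * hb1 X Z U Y W + (1/4 : ℝ) * hb1 X Z U W Y + (1/4 : ℝ) * hb1 X W Y Z U + (1/6 : ℝ) * hb1 X U Y Z W + (1/6 : ℝ) * hb1 Y Z W X U + (1/12 : ℝ) * hb1 Y Z W U X + (1/12 : ℝ) * hb1 Y W Z U X + (-1/12 : ℝ) * hb2 X Y Z W U + (-1/3 : ℝ) * hb2 X Y Z U W + (-1/4 : ℝ) * hb2 X Z Y W U + (-5/12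 : ℝ) * hb2 X Z Y U W + (1/6 : ℝ) * hb2 X W Y U Z + (1/12 : ℝ) * hb2 X U Y W Z + (1/12 : ℝ) * hb2 Y Z X W U + (1/6 : ℝ) * hb2 Y Z X U W + (1/4 : ℝ) * hb2 Y W X Z U + (1/6 : ℝ) * hb2 Y W X U Z + (1/6 : ℝ) * hb2 Y U X Z W + (1/6 : ℝ) * hpair X Y Z W U + (1/12 : ℝ) * hpair X Y Z U W + (5/6 : ℝ) * hpair X Z Y W U + (1/3 : ℝ) * hpair X Z Y U W + (1/4 : ℝ) * hpair X Z W Y U + (1/6 : ℝ) * hpair X Z U Y W + (-1/6 : ℝ) * hpair X Z U W Y + (5/6 : ℝ) * hpair X W Y Z U + (-1/12 : ℝ) * hpair X W Y U Z + (1/12 : ℝ) * hpair X W Z U Y + (-1/6 : ℝ) * hpair X W U Z Y + (1/6 : ℝ) * hpair X U Y Z W + (-1/6 : ℝ) * hpair Y X Z W U + (-1/6 : ℝ) * hpair Y X Z U W + (-1/3 : ℝ) * hpair Y Z W X U + (-1/12 : ℝ) * hpair Y Z W U X + (-1/12 : ℝ) * hpair Y Z U X W + (-1/12 : ℝ) *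 hpair Y W Z U X + (1/12 : ℝ) * hpair Y W U X Z + (-1/6 : ℝ) * hpair Z X W U Y + (-1/3 : ℝ) * hpair Z X U W Y + (1/6 : ℝ) * hskew X Y Z W U + (1/6 : ℝ) * hskew X Y Z U W + (-1/4 : ℝ) * hskew X Y W Z U + (1/6 : ℝ) * hskew X Y W U Z + (-1/6 : ℝ) * hskew X Y U Z W + (1/3 : ℝ) * hskew X Y U W Z + (-5/12 : ℝ) * hskew X Z Y W U + (1/12 : ℝ) * hskew X Z Y U W + (1/6 : ℝ) * hskew X Z W U Y + (1/3 : ℝ) * hskew X Z U W Y + (-11/12 : ℝ) * hskew X W Y Z U + (1/12 : ℝ) * hskew X W Y U Z + (-1/6 : ℝ) * hskew X W Z Y U + (-1/3 : ℝ) * hskew X U Y Z W + (1/12 : ℝ) * hskew X U Y W Z + (-1/12 : ℝ) * hskew X U Z Y W + (1/12 : ℝ) * hskew X U Z W Y + (-1/12 : ℝ) * hskew Y Z W U X + (-1/6 : ℝ) * hskew Y W Z X U + (-1/12 : ℝ) * hskew Y W Z U X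
end

section
/- Let V be a real vector space and T : V⁵ → ℝ a multilinear map with the algebraic symmetries of ∇R such that T(U,V,U,V,U) = 0 for all U, V ∈ V. Then T(U,V,U,V,W) = 0 for all U, V, W ∈ V. -/
/-!
Polarizing the cubic form `a ↦ T(a,m,a,m,a)` and using pair symmetry gives
`2 T(U,V,W,V,U) = -T(U,V,U,V,W)` and, with `U` and `V` exchanged, `2 T(U,V,W,U,V) = T(U,V,U,V,W)`.
Substituting both into the second Bianchi identity
`T(U,V,U,V,W) + T(U,V,V,W,U) + T(U,V,W,U,V) = 0` leaves `2 T(U,V,U,V,W) = 0`.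
-/

namespace MultilinearMap

variable {R V : Type*} [CommRing R] [AddCommGroup V] [Module R V]
  (T : MultilinearMap R (fun _ : Fin 5 => V) R)

section Fin5

variable (a b c d e x y : V)

lemma map_vec5_add_zero : T ![x + y, b, c, d, e] = T ![x, b, c, d, e] + T ![y, b, c, d, e] := by
  convert T.map_update_add ![x, b, c, d, e] 0 x y using 3 <;> funext i <;> fin_cases i <;> rfl

lemma map_vec5_add_two : T ![a, b, x + y, d, e] = T ![a, b, x, d, e] + T ![a, b, y, d, e] := by
  convert T.map_update_add ![a, b, x, d, e] 2 x y using 3 <;> funext i <;> fin_cases i <;> rfl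

lemma map_vec5_add_four : T ![a, b, c, d, x + y] = T ![a, b, c, d, x] + T ![a, b, c, d, y] := by
  convert T.map_update_add ![a, b, c, d, x] 4 x y using 3 <;> funext i <;> fin_cases i <;> rfl

lemma map_vec5_neg_zero : T ![-x, b, c, d, e] = -T ![x, b, c, d, e] := by
  convert T.map_update_neg ![x, b, c, d, e] 0 x using 3 <;> funext i <;> fin_cases i <;> rfl

lemma map_vec5_neg_two : T ![a, b, -x, d, e] = -T ![a, b, x, d, e] := by
  convert T.map_update_neg ![a, b, x, d, e] 2 x using 3 <;> funext i <;> fin_cases i <;> rfl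

lemma map_vec5_neg_four : T ![a, b, c, d, -x] = -T ![a, b, c, d, x] := by
  convert T.map_update_neg ![a, b, c, d, x] 4 x using 3 <;> funext i <;> fin_cases i <;> rfl

end Fin5

lemma polarization_of_map_diag_eq_zero [NoZeroDivisors R] [NeZero (2 : R)] {m : V}
    (hdiag : ∀ a : V, T ![a, m, a, m, a] = 0) (a b : V) :
    T ![b, m, a, m, a] + T ![a, m, b, m, a] + T ![a, m, a, m, b] = 0 := by
  have hplus := hdiag (a + b)
  have hminus := hdiag (a + -b)
  simp only [map_vec5_add_zero, map_vec5_add_two, map_vec5_add_four, map_vec5_neg_zero,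
    map_vec5_neg_two, map_vec5_neg_four] at hplus hminus
  have htwice : 2 * (T ![b, m, a, m, a] + T ![a, m, b, m, a] + T ![a, m, a, m, b]) = 0 := by
    linear_combination hplus - hminus - 2 * hdiag b
  exact (mul_eq_zero.1 htwice).resolve_left two_ne_zero

end MultilinearMap

theorem stmt4_general {V : Type*} [AddCommGroup V] [Module ℝ V]
    (T : MultilinearMap ℝ (fun _ : Fin 5 => V) ℝ)
    (hskew : ∀ X Y Z W U : V, T ![X, Y, Z, W, U] = - T ![Y, X, Z, W, U])
    (hpair : ∀ X Y Z W U : V, T ![X, Y, Z, W, U] = T ![Z, W, X, Y, U])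
    (hb2 : ∀ X Y Z W U : V,
      T ![X, Y, Z, W, U] + T ![X, Y, W, U, Z] + T ![X, Y, U, Z, W] = 0)
    (hdiag : ∀ U V' : V, T ![U, V', U, V', U] = 0) :
    ∀ U V' W : V, T ![U, V', U, V', W] = 0 := by
  have hskew₂ : ∀ X Y Z W U : V, T ![X, Y, Z, W, U] = - T ![X, Y, W, Z, U] := fun X Y Z W U => by
    rw [hpair X Y, hskew Z W, hpair W Z]
  intro U V' W
  have hU := T.polarization_of_map_diag_eq_zero (hdiag · V') U W
  have hV := T.polarization_of_map_diag_eq_zero (hdiag · U) V' W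
  rw [hpair W] at hU hV
  rw [hskew V' U W, hskew V' U V', hskew₂ U V' V'] at hV
  have hbianchi := hb2 U V' U V' W
  rw [hskew₂ U V' V'] at hbianchi
  linear_combination (2 * hbianchi + hU + hV) / 4

/-- under the ∇R symmetries, T(U,V,U,V,U)=0 forces T(U,V,U,V,W)=0. -/
theorem stmt4 {V : Type*} [AddCommGroup V] [Module ℝ V]
    (T : MultilinearMap ℝ (fun _ : Fin 5 => V) ℝ)
    (hskew : ∀ X Y Z W U : V, T ![X, Y, Z, W, U] = - T ![Y, X, Z, W, U])
    (hpair : ∀ X Y Z W U : V, T ![X, Y, Z, W, U] = T ![Z, W, X, Y, U])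
    (hb1 : ∀ X Y Z W U : V,
      T ![X, Y, Z, W, U] + T ![Y, Z, X, W, U] + T ![Z, X, Y, W, U] = 0)
    (hb2 : ∀ X Y Z W U : V,
      T ![X, Y, Z, W, U] + T ![X, Y, W, U, Z] + T ![X, Y, U, Z, W] = 0)
    (hdiag : ∀ U V' : V, T ![U, V', U, V', U] = 0) :
    ∀ U V' W : V, T ![U, V', U, V', W] = 0 :=
  stmt4_general T hskew hpair hb2 hdiag
end

section
/- If a smooth curve γ : (-δ,δ) → ℝⁿ satisfies γ(0) = 0 and γ''(0) ≠ 0 with γ'(0) ≠ 0 and γ''(0) not parallel to γ'(0), then there exists ε > 0 such that for every line L through the origin, γ restricted to (-ε,ε) intersects L in at most two points. Consequently, if for arbitrarily small ε there exists a line through 0 meeting γ|(-ε,ε) in at least three points (namely γ(-ε), 0, γ(ε)), then γ''(0) is a multiple of γ'(0). -/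
/-!
Pick continuous functionals `α`, `β` with `α γ'(0) = 1`, `β γ'(0) = 0` and `β γ''(0) = 1`, and put
`a = α ∘ γ`, `b = β ∘ γ`, so that `a t ~ t` and `b t ~ t² / 2`. If `γ s` and `γ t` lie on one line
through the origin then `b / a` takes the same value at `s` and `t`. Near `0` the quotient `b / a`
has the sign of `t`, and its derivative `(b' a - b a') / a²` tends to `1 / 2` (L'Hôpital gives
`b t / t² → 1 / 2`), so `b / a` is injective on a punctured neighbourhood of `0`.
-/

open Set Filter Topology

theorem SeparatingDual.exists_eq_zero_eq_one {R V : Type*} [Field R] [AddCommGroup V]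
    [TopologicalSpace R] [TopologicalSpace V] [IsTopologicalRing R] [Module R V]
    [SeparatingDual R V] {v w : V} (hw : w ∉ Submodule.span R {v}) :
    ∃ f : StrongDual R V, f v = 0 ∧ f w = 1 := by
  rcases eq_or_ne v 0 with rfl | hv
  · obtain ⟨f, hf⟩ := exists_eq_one (R := R) (x := w) (by rintro rfl; exact hw (zero_mem _))
    exact ⟨f, map_zero f, hf⟩
  obtain ⟨u, hu⟩ := exists_eq_one (R := R) hv
  have hw₀ : w - u w • v ≠ 0 := fun h =>
    hw (Submodule.mem_span_singleton.2 ⟨u w, (sub_eq_zero.1 h).symm⟩)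
  obtain ⟨g, hg⟩ := exists_eq_one (R := R) hw₀
  -- `g - g v • u` kills `v` and still takes the value `1` at `w - u w • v`
  refine ⟨g - g v • u, by simp [hu], ?_⟩
  simp only [map_sub, map_smul, smul_eq_mul] at hg
  simp only [sub_apply, smul_apply, smul_eq_mul]
  linear_combination hg

theorem ContDiffOn.hasDerivAt_derivWithin {𝕜 F : Type*} [NontriviallyNormedField 𝕜]
    [NormedAddCommGroup F] [NormedSpace 𝕜 F] {f : 𝕜 → F} {s : Set 𝕜} {n : WithTop ℕ∞} {x : 𝕜}
    (hf : ContDiffOn 𝕜 n f s) (hn : n ≠ 0) (hs : IsOpen s) (hx : x ∈ s) :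
    HasDerivAt f (derivWithin f s x) x := by
  rw [derivWithin_of_isOpen hs hx]
  exact ((hf.differentiableOn hn).differentiableAt (hs.mem_nhds hx)).hasDerivAt

theorem Set.encard_le_two_of_subsingleton_diff {α : Type*} {s : Set α} {a : α}
    (h : (s \ {a}).Subsingleton) : s.encard ≤ 2 :=
  calc s.encard ≤ (insert a (s \ {a})).encard := by
        rw [insert_sdiff_singleton]; exact encard_le_encard (subset_insert a s)
    _ ≤ (s \ {a}).encard + 1 := encard_insert_le _ _
    _ ≤ 1 + 1 := by gcongr; exact encard_le_one_iff_subsingleton.2 h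
    _ = 2 := one_add_one_eq_two

theorem tendsto_div_self_of_hasDerivAt {f : ℝ → ℝ} {c : ℝ} (hf : HasDerivAt f c 0)
    (h0 : f 0 = 0) : Tendsto (fun t => f t / t) (𝓝[≠] 0) (𝓝 c) := by
  simpa [h0, div_eq_inv_mul] using hf.tendsto_slope_zero

theorem tendsto_div_sq_of_hasDerivAt {f f' : ℝ → ℝ} {c : ℝ}
    (hf : ∀ᶠ t in 𝓝 0, HasDerivAt f (f' t) t) (hf' : HasDerivAt f' c 0)
    (h0 : f 0 = 0) (h0' : f' 0 = 0) :
    Tendsto (fun t => f t / t ^ 2) (𝓝[≠] 0) (𝓝 (c / 2)) := by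
  refine HasDerivAt.lhopital_zero_nhdsNE (f' := f') (g' := fun t => 2 * t)
    (eventually_nhdsWithin_of_eventually_nhds hf)
    (Eventually.of_forall fun t => by simpa using hasDerivAt_pow 2 t)
    (eventually_mem_nhdsWithin.mono fun t ht => mul_ne_zero two_ne_zero ht) ?_ ?_ ?_
  · simpa [h0] using hf.self_of_nhds.continuousAt.tendsto.mono_left nhdsWithin_le_nhds
  · simpa using ((continuous_pow 2).tendsto (0 : ℝ)).mono_left nhdsWithin_le_nhds
  · exact ((tendsto_div_self_of_hasDerivAt hf' h0').div_const 2).congr fun t => by ring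

theorem exists_Ioo_of_eventually_nhdsNE {p : ℝ → Prop} (h : ∀ᶠ t in 𝓝[≠] 0, p t) :
    ∃ ε > 0, ∀ t ∈ Ioo (-ε) ε, t ≠ 0 → p t := by
  obtain ⟨ε, hε, hball⟩ := Metric.mem_nhdsWithin_iff.1 h
  refine ⟨ε, hε, fun t ht ht0 => hball ⟨?_, ht0⟩⟩
  simpa [Real.ball_eq_Ioo] using ht

theorem strictMonoOn_Ioo_diff_zero {θ θ' : ℝ → ℝ} {ε : ℝ}
    (hd : ∀ t ∈ Ioo (-ε) ε, t ≠ 0 → HasDerivAt θ (θ' t) t)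
    (hpos : ∀ t ∈ Ioo (-ε) ε, t ≠ 0 → 0 < θ' t)
    (hsign : ∀ t ∈ Ioo (-ε) ε, t ≠ 0 → 0 < θ t / t) :
    StrictMonoOn θ (Ioo (-ε) ε \ {0}) := by
  have piece : ∀ {l r : ℝ}, Ioo l r ⊆ Ioo (-ε) ε \ {0} → StrictMonoOn θ (Ioo l r) := by
    intro l r hsub
    have hd' : ∀ t ∈ Ioo l r, HasDerivAt θ (θ' t) t := fun t ht => hd t (hsub ht).1 (hsub ht).2
    refine strictMonoOn_of_hasDerivWithinAt_pos (f' := θ') (convex_Ioo l r)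
      (fun t ht => (hd' t ht).continuousAt.continuousWithinAt) (fun t ht => ?_) fun t ht => ?_
    · rw [interior_Ioo] at ht; exact (hd' t ht).hasDerivWithinAt
    · rw [interior_Ioo] at ht; exact hpos t (hsub ht).1 (hsub ht).2
  have hneg : StrictMonoOn θ (Ioo (-ε) 0) :=
    piece fun t ht => ⟨⟨ht.1, by linarith [ht.2, ht.1]⟩, ht.2.ne⟩
  have hpos' : StrictMonoOn θ (Ioo 0 ε) :=
    piece fun t ht => ⟨⟨by linarith [ht.2, ht.1], ht.2⟩, ht.1.ne'⟩
  rintro s ⟨hs, hs0⟩ t ⟨ht, ht0⟩ hst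
  rcases lt_or_gt_of_ne hs0 with hs0 | hs0 <;> rcases lt_or_gt_of_ne ht0 with ht0 | ht0
  · exact hneg ⟨hs.1, hs0⟩ ⟨ht.1, ht0⟩ hst
  · have hθs : θ s < 0 :=
      ((div_pos_iff.1 (hsign s hs (ne_of_lt hs0))).resolve_left fun h => hs0.not_gt h.2).1
    have hθt : 0 < θ t := (div_pos_iff_of_pos_right ht0).1 (hsign t ht (ne_of_gt ht0))
    exact hθs.trans hθt
  · linarith
  · exact hpos' ⟨hs0, hs.2⟩ ⟨ht0, ht.2⟩ hst

theorem exists_Ioo_eq_of_mul_eq_mul {a b a' b' : ℝ → ℝ} {c : ℝ}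
    (ha : ∀ᶠ t in 𝓝 0, HasDerivAt a (a' t) t) (hb : ∀ᶠ t in 𝓝 0, HasDerivAt b (b' t) t)
    (ha' : ContinuousAt a' 0) (hb' : HasDerivAt b' c 0)
    (ha0 : a 0 = 0) (hb0 : b 0 = 0) (hb'0 : b' 0 = 0) (ha'0 : 0 < a' 0) (hc : 0 < c) :
    ∃ ε > 0, ∀ s ∈ Ioo (-ε) ε, ∀ t ∈ Ioo (-ε) ε, s ≠ 0 → t ≠ 0 →
      a s * b t = a t * b s → s = t := by
  have ha_lim := tendsto_div_self_of_hasDerivAt ha.self_of_nhds ha0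
  have hb_lim := tendsto_div_sq_of_hasDerivAt hb hb' hb0 hb'0
  have hN_lim : Tendsto (fun t => (b' t * a t - b t * a' t) / t ^ 2) (𝓝[≠] 0)
      (𝓝 (c * a' 0 - c / 2 * a' 0)) := by
    have := ((tendsto_div_self_of_hasDerivAt hb' hb'0).mul ha_lim).sub
      (hb_lim.mul (ha'.tendsto.mono_left nhdsWithin_le_nhds))
    exact this.congr fun t => by ring
  obtain ⟨ε, hε, hP⟩ := exists_Ioo_of_eventually_nhdsNE <|
    (eventually_nhdsWithin_of_eventually_nhds (ha.and hb)).and <|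
      (ha_lim.eventually (lt_mem_nhds ha'0)).and <|
        (hb_lim.eventually (lt_mem_nhds (half_pos hc))).and
          (hN_lim.eventually (lt_mem_nhds (by nlinarith : (0 : ℝ) < c * a' 0 - c / 2 * a' 0)))
  refine ⟨ε, hε, fun s hs t ht hs0 ht0 hst => ?_⟩
  have ha_ne : ∀ t ∈ Ioo (-ε) ε, t ≠ 0 → a t ≠ 0 := fun t ht ht0 h => by
    simpa [h] using (hP t ht ht0).2.1
  have hmono : StrictMonoOn (fun t => b t / a t) (Ioo (-ε) ε \ {0}) := by
    refine strictMonoOn_Ioo_diff_zero (θ' := fun t => (b' t * a t - b t * a' t) / a t ^ 2)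
      (fun t ht ht0 => ?_) (fun t ht ht0 => ?_) fun t ht ht0 => ?_
    · obtain ⟨⟨hat, hbt⟩, -⟩ := hP t ht ht0
      exact hbt.div hat (ha_ne t ht ht0)
    · obtain ⟨-, -, -, hN⟩ := hP t ht ht0
      exact div_pos ((div_pos_iff_of_pos_right (by positivity)).1 hN)
        (pow_two_pos_of_ne_zero (ha_ne t ht ht0))
    · obtain ⟨-, hat, hbt, -⟩ := hP t ht ht0
      have : b t / a t / t = b t / t ^ 2 / (a t / t) := by field_simp
      rw [this]
      exact div_pos hbt hat
  refine hmono.injOn ⟨hs, hs0⟩ ⟨ht, ht0⟩ ?_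
  rw [div_eq_div_iff (ha_ne s hs hs0) (ha_ne t ht ht0)]
  linarith

theorem exists_Ioo_eq_of_mem_span_singleton {E : Type*} [NormedAddCommGroup E] [NormedSpace ℝ E]
    {γ γ' : ℝ → E} {w : E} (hγ : ∀ᶠ t in 𝓝 0, HasDerivAt γ (γ' t) t) (hγ' : HasDerivAt γ' w 0)
    (h0 : γ 0 = 0) (hv : γ' 0 ≠ 0) (hw : w ∉ Submodule.span ℝ {γ' 0}) :
    ∃ ε > 0, ∀ s ∈ Ioo (-ε) ε, ∀ t ∈ Ioo (-ε) ε, s ≠ 0 → t ≠ 0 →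
      γ s ∈ Submodule.span ℝ {γ t} → s = t := by
  obtain ⟨α, hα⟩ := SeparatingDual.exists_eq_one (R := ℝ) hv
  obtain ⟨β, hβv, hβw⟩ := SeparatingDual.exists_eq_zero_eq_one hw
  have hcomp : ∀ f : StrongDual ℝ E, ∀ᶠ t in 𝓝 0, HasDerivAt (f ∘ γ) (f (γ' t)) t :=
    fun f => hγ.mono fun t ht => f.hasFDerivAt.comp_hasDerivAt t ht
  obtain ⟨ε, hε, hinj⟩ := exists_Ioo_eq_of_mul_eq_mul (hcomp α) (hcomp β)
    (α.continuous.continuousAt.comp hγ'.continuousAt) (β.hasFDerivAt.comp_hasDerivAt 0 hγ')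
    (by simp [h0]) (by simp [h0]) hβv (by simp [hα]) (by simp [hβw])
  refine ⟨ε, hε, fun s hs t ht hs0 ht0 hst => hinj s hs t ht hs0 ht0 ?_⟩
  obtain ⟨r, hr⟩ := Submodule.mem_span_singleton.1 hst
  simp only [Function.comp_apply, ← hr, map_smul, smul_eq_mul]
  ring

/-- a C² curve γ : (-δ,δ) → ℝⁿ with γ(0)=0, γ'(0) ≠ 0.
(a) If γ''(0) ≠ 0 and γ''(0) is not parallel to γ'(0), then on a small enough
interval (-ε,ε) the curve meets every line through the origin in at most two
points.  (b) Consequently, if for arbitrarily small ε there is a line through 0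
containing the three distinct points γ(-ε), 0, γ(ε), then γ''(0) is a multiple
of γ'(0). -/
theorem stmt14 {n : ℕ} (δ : ℝ) (hδ : 0 < δ)
    (γ : ℝ → EuclideanSpace ℝ (Fin n))
    (hγ : ContDiffOn ℝ 2 γ (Ioo (-δ) δ))
    (h0 : γ 0 = 0)
    (h1 : derivWithin γ (Ioo (-δ) δ) 0 ≠ 0) :
    ((derivWithin (derivWithin γ (Ioo (-δ) δ)) (Ioo (-δ) δ) 0 ≠ 0 ∧
      ∀ c : ℝ, derivWithin (derivWithin γ (Ioo (-δ) δ)) (Ioo (-δ) δ) 0 ≠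
        c • derivWithin γ (Ioo (-δ) δ) 0) →
      ∃ ε > 0, ε ≤ δ ∧
        ∀ L : Submodule ℝ (EuclideanSpace ℝ (Fin n)), Module.finrank ℝ L = 1 →
          (γ '' Ioo (-ε) ε ∩ (L : Set (EuclideanSpace ℝ (Fin n)))).encard ≤ 2) ∧
    ((∀ ε : ℝ, 0 < ε → ε < δ →
        ∃ L : Submodule ℝ (EuclideanSpace ℝ (Fin n)), Module.finrank ℝ L = 1 ∧
          γ (-ε) ∈ L ∧ γ ε ∈ L ∧ γ (-ε) ≠ 0 ∧ γ ε ≠ 0 ∧ γ (-ε) ≠ γ ε) →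
      ∃ c : ℝ, derivWithin (derivWithin γ (Ioo (-δ) δ)) (Ioo (-δ) δ) 0 =
        c • derivWithin γ (Ioo (-δ) δ) 0) := by
  set I := Ioo (-δ) δ
  have hI : IsOpen I := isOpen_Ioo
  have h0I : (0 : ℝ) ∈ I := ⟨neg_lt_zero.2 hδ, hδ⟩
  have hγ₁ : ∀ᶠ t in 𝓝 0, HasDerivAt γ (derivWithin γ I t) t :=
    eventually_of_mem (hI.mem_nhds h0I) fun t ht => hγ.hasDerivAt_derivWithin two_ne_zero hI ht
  have hγ₂ := (hγ.derivWithin (m := 1) hI.uniqueDiffOn le_rfl).hasDerivAt_derivWithin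
    one_ne_zero hI h0I
  have key : (∀ c : ℝ, derivWithin (derivWithin γ I) I 0 ≠ c • derivWithin γ I 0) →
      ∃ ε > 0, ε ≤ δ ∧ ∀ s ∈ Ioo (-ε) ε, ∀ t ∈ Ioo (-ε) ε, s ≠ 0 → t ≠ 0 →
        γ s ∈ Submodule.span ℝ {γ t} → s = t := by
    intro hw
    obtain ⟨ε, hε, hinj⟩ := exists_Ioo_eq_of_mem_span_singleton hγ₁ hγ₂ h0 h1 fun h =>
      let ⟨c, hc⟩ := Submodule.mem_span_singleton.1 h; hw c hc.symm
    have hsub : Ioo (-min ε δ) (min ε δ) ⊆ Ioo (-ε) ε :=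
      Ioo_subset_Ioo (neg_le_neg (min_le_left ε δ)) (min_le_left ε δ)
    exact ⟨min ε δ, lt_min hε hδ, min_le_right ε δ, fun s hs t ht => hinj s (hsub hs) t (hsub ht)⟩
  refine ⟨fun hw => ?_, fun hlines => ?_⟩
  · obtain ⟨ε, hε, hεδ, hinj⟩ := key hw.2
    refine ⟨ε, hε, hεδ, fun L hL => Set.encard_le_two_of_subsingleton_diff (a := 0) ?_⟩
    rintro _ ⟨⟨⟨s, hs, rfl⟩, hsL⟩, hs0⟩ _ ⟨⟨⟨t, ht, rfl⟩, htL⟩, ht0⟩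
    have hst := eq_span_singleton_of_mem_of_finrank_eq_one hL htL ht0 ▸ hsL
    rw [hinj s hs t ht (by rintro rfl; exact hs0 h0) (by rintro rfl; exact ht0 h0) hst]
  · by_contra! hw
    obtain ⟨ε, hε, hεδ, hinj⟩ := key hw
    obtain ⟨L, hL, hmL, hpL, -, hp0, -⟩ := hlines (ε / 2) (half_pos hε) (by linarith)
    have hmp := eq_span_singleton_of_mem_of_finrank_eq_one hL hpL hp0 ▸ hmL
    have := hinj (-(ε / 2)) ⟨by linarith, by linarith⟩ (ε / 2) ⟨by linarith, by linarith⟩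
      (neg_ne_zero.2 (half_pos hε).ne') (half_pos hε).ne' hmp
    linarith
end
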